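/- arXiv:1811.04527 — 3 statements merged into one kernel-verified Lean document; each statement's English description precedes it below -/
import Mathlib

section
/- Let γ > 0, n ≥ 1, and let φ : [0,∞) → ℝⁿ be continuous with ‖φ(t)‖ ≤ B for all t ≥ 0 for some B > 0. Suppose φ is persistently exciting: there exist α₁ > 0 and T > 0 such that for all t ≥ 0, ∫_{t}^{t+T} φ(τ) φ(τ)ᵀ dτ − α₁ I is positive semidefinite. Then there exist ρ > 0 and λ > 0 such that every differentiable θ̃ : [0,∞) → ℝⁿ satisfying θ̃'(t) = −γ φ(t) (φ(t)ᵀ θ̃(t)) obeys ‖θ̃(t)‖ ≤ ρ e^{−λ(t−t₀)} ‖θ̃(t₀)‖ for all t ≥ t₀ ≥ 0. -/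
/-!
Along the flow, `‖θ̃‖²` decreases at rate `2γ⟪φ, θ̃⟫²`. Over an excitation window `[t, t + T]`
the state moves by at most `γB ∫ |⟪φ, θ̃⟫|`, which Cauchy–Schwarz bounds by the square root of the
dissipated energy; so `⟪φ, θ̃ t⟫²` is controlled by `⟪φ, θ̃⟫²` up to that energy, and persistent
excitation turns `α ‖θ̃ t‖²` into a multiple of the energy dissipated in the window. Hence
`‖θ̃‖` contracts by a fixed factor `q < 1` on every window, and monotonicity of `‖θ̃‖` interpolates
between windows.
-/

open scoped RealInnerProductSpace Matrix
open MeasureTheory Set intervalIntegral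

theorem pow_floor_le_inv_mul_rpow {q x : ℝ} (hq0 : 0 < q) (hq1 : q ≤ 1) :
    q ^ ⌊x⌋₊ ≤ q⁻¹ * q ^ x := by
  have h := Real.rpow_le_rpow_of_exponent_ge hq0 hq1 (Nat.lt_floor_add_one x).le
  rw [Real.rpow_add hq0, Real.rpow_one, Real.rpow_natCast] at h
  rwa [inv_mul_eq_div, le_div_iff₀ hq0]

theorem le_pow_mul_of_add_le_mul {f : ℝ → ℝ} {a T q t₀ : ℝ} (hT : 0 ≤ T) (hq : 0 ≤ q)
    (h : ∀ s ≥ a, f (s + T) ≤ q * f s) (ht₀ : a ≤ t₀) (m : ℕ) :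
    f (t₀ + m * T) ≤ q ^ m * f t₀ := by
  induction m with
  | zero => simp
  | succ m ih =>
    calc f (t₀ + (m + 1 : ℕ) * T) = f (t₀ + m * T + T) := by push_cast; ring_nf
      _ ≤ q * f (t₀ + m * T) := h _ (by nlinarith [m.cast_nonneg (α := ℝ)])
      _ ≤ q ^ (m + 1) * f t₀ := by
        rw [pow_succ', mul_assoc]; exact mul_le_mul_of_nonneg_left ih hq

theorem AntitoneOn.le_mul_exp_of_add_le_mul {f : ℝ → ℝ} {a T q t₀ t : ℝ}
    (hf : AntitoneOn f (Ici a)) (hT : 0 < T) (hq0 : 0 < q) (hq1 : q ≤ 1)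
    (h : ∀ s ≥ a, f (s + T) ≤ q * f s) (ht₀ : a ≤ t₀) (ht : t₀ ≤ t) (hf₀ : 0 ≤ f t₀) :
    f t ≤ q⁻¹ * Real.exp (-(Real.log q⁻¹ / T) * (t - t₀)) * f t₀ := by
  set m := ⌊(t - t₀) / T⌋₊
  have hmT : t₀ + m * T ≤ t := by
    have := Nat.floor_le (div_nonneg (sub_nonneg.2 ht) hT.le)
    rw [le_div_iff₀ hT] at this
    linarith
  have hrpow : q ^ ((t - t₀) / T) = Real.exp (-(Real.log q⁻¹ / T) * (t - t₀)) := by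
    rw [Real.rpow_def_of_pos hq0, Real.log_inv]
    ring_nf
  calc f t ≤ f (t₀ + m * T) :=
        hf (mem_Ici.2 (le_add_of_le_of_nonneg ht₀ (by positivity))) (ht₀.trans ht) hmT
    _ ≤ q ^ m * f t₀ := le_pow_mul_of_add_le_mul hT.le hq0.le h ht₀ m
    _ ≤ q⁻¹ * q ^ ((t - t₀) / T) * f t₀ :=
      mul_le_mul_of_nonneg_right (pow_floor_le_inv_mul_rpow hq0 hq1) hf₀
    _ = _ := by rw [hrpow]

theorem sq_intervalIntegral_le_mul_integral_sq {f : ℝ → ℝ} {a b : ℝ} (hab : a ≤ b)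
    (hf : IntervalIntegrable f volume a b)
    (hf2 : IntervalIntegrable (fun x ↦ f x ^ 2) volume a b) :
    (∫ x in a..b, f x) ^ 2 ≤ (b - a) * ∫ x in a..b, f x ^ 2 := by
  rcases hab.eq_or_lt with rfl | hab
  · simp
  -- the variance of `f` on `[a, b]`, scaled by `(b - a) ^ 2`, is nonnegative
  have hvar : 0 ≤ ∫ x in a..b, ((b - a) * f x - ∫ y in a..b, f y) ^ 2 :=
    integral_nonneg hab.le fun _ _ ↦ sq_nonneg _
  have hexpand : ∫ x in a..b, ((b - a) * f x - ∫ y in a..b, f y) ^ 2 =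
      (b - a) * ((b - a) * (∫ x in a..b, f x ^ 2) - (∫ x in a..b, f x) ^ 2) := by
    have h : ∀ x, ((b - a) * f x - ∫ y in a..b, f y) ^ 2 = (b - a) ^ 2 * f x ^ 2 -
        2 * (b - a) * (∫ y in a..b, f y) * f x + (∫ y in a..b, f y) ^ 2 := fun x ↦ by ring
    simp_rw [h]
    rw [integral_add ((hf2.const_mul _).sub (hf.const_mul _)) intervalIntegrable_const,
      integral_sub (hf2.const_mul _) (hf.const_mul _), intervalIntegral.integral_const_mul,
      intervalIntegral.integral_const_mul, intervalIntegral.integral_const, smul_eq_mul]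
    ring
  rw [hexpand] at hvar
  linarith [(mul_nonneg_iff_of_pos_left (sub_pos.2 hab)).1 hvar]

/-- Per window `‖θ̃‖²` shrinks by the factor `c / (c + 2γα)`, where `c = 2 + 2γ²B⁴T²` is the
constant of `mul_norm_sq_le_mul_integral_inner_sq`. -/
noncomputable def windowContraction (γ α B T : ℝ) : ℝ :=
  √((2 + 2 * γ ^ 2 * B ^ 4 * T ^ 2) / (2 + 2 * γ ^ 2 * B ^ 4 * T ^ 2 + 2 * γ * α))

theorem windowContraction_pos {γ α B T : ℝ} (hγ : 0 ≤ γ) (hα : 0 ≤ α) :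
    0 < windowContraction γ α B T :=
  Real.sqrt_pos.2 (by positivity)

theorem windowContraction_lt_one {γ α B T : ℝ} (hγ : 0 < γ) (hα : 0 < α) :
    windowContraction γ α B T < 1 := by
  have : 0 < 2 * γ * α := by positivity
  rw [windowContraction, Real.sqrt_lt' one_pos, one_pow, div_lt_one (by positivity)]
  linarith

theorem dotProduct_mulVec_integral_gram {ι : Type*} [Fintype ι] {φ : ℝ → EuclideanSpace ℝ ι}
    {a b : ℝ} (hφ : ∀ i j, IntervalIntegrable (fun τ ↦ φ τ i * φ τ j) volume a b)
    (x : EuclideanSpace ℝ ι) :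
    x.ofLp ⬝ᵥ (Matrix.of fun i j ↦ ∫ τ in a..b, φ τ i * φ τ j) *ᵥ x.ofLp =
      ∫ τ in a..b, ⟪φ τ, x⟫ ^ 2 := by
  have hexpand : ∀ τ, ⟪φ τ, x⟫ ^ 2 = ∑ i, ∑ j, x i * x j * (φ τ i * φ τ j) := fun τ ↦ by
    rw [EuclideanSpace.inner_eq_star_dotProduct, sq, dotProduct, Finset.sum_mul_sum]
    simp only [star_trivial]
    refine Finset.sum_congr rfl fun i _ ↦ Finset.sum_congr rfl fun j _ ↦ ?_
    ring
  simp_rw [hexpand]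
  rw [intervalIntegral.integral_finsetSum fun i _ ↦ by
    simpa only [Finset.sum_fn] using
      IntervalIntegrable.sum _ fun j _ ↦ (hφ i j).const_mul (x i * x j)]
  simp only [dotProduct, Matrix.mulVec, Matrix.of_apply, Finset.mul_sum]
  refine Finset.sum_congr rfl fun i _ ↦ ?_
  rw [intervalIntegral.integral_finsetSum fun j _ ↦ (hφ i j).const_mul _]
  refine Finset.sum_congr rfl fun j _ ↦ ?_
  rw [intervalIntegral.integral_const_mul]
  ring

theorem mul_norm_sq_le_integral_inner_sq_of_posSemidef {ι : Type*} [Fintype ι] [DecidableEq ι]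
    {φ : ℝ → EuclideanSpace ℝ ι} {a b α : ℝ} (hφ : ContinuousOn φ (uIcc a b))
    (hPE : ((Matrix.of fun i j ↦ ∫ τ in a..b, φ τ i * φ τ j) - α • (1 : Matrix ι ι ℝ)).PosSemidef)
    (x : EuclideanSpace ℝ ι) :
    α * ‖x‖ ^ 2 ≤ ∫ τ in a..b, ⟪φ τ, x⟫ ^ 2 := by
  have hcoord : ∀ i, ContinuousOn (fun τ ↦ φ τ i) (uIcc a b) := fun i ↦
    (EuclideanSpace.proj i).continuous.comp_continuousOn hφ
  have h := hPE.dotProduct_mulVec_nonneg x.ofLp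
  rw [star_trivial, Matrix.sub_mulVec, dotProduct_sub, Matrix.smul_mulVec, Matrix.one_mulVec,
    dotProduct_smul, dotProduct_mulVec_integral_gram
      (fun i j ↦ ((hcoord i).mul (hcoord j)).intervalIntegrable), smul_eq_mul] at h
  have hnorm : x.ofLp ⬝ᵥ x.ofLp = ‖x‖ ^ 2 := by
    rw [← real_inner_self_eq_norm_sq, EuclideanSpace.inner_eq_star_dotProduct, star_trivial]
  rw [hnorm] at h
  linarith

section GradientFlow

variable {E : Type*} [NormedAddCommGroup E] [InnerProductSpace ℝ E] {φ θ : ℝ → E} {γ : ℝ}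

theorem hasDerivAt_norm_sq_of_gradient {s : ℝ}
    (hθ : HasDerivAt θ (-(γ * ⟪φ s, θ s⟫) • φ s) s) :
    HasDerivAt (‖θ ·‖ ^ 2) (-(2 * γ) * ⟪φ s, θ s⟫ ^ 2) s := by
  convert hθ.norm_sq using 1
  rw [real_inner_smul_right, real_inner_comm]
  ring

theorem norm_sq_add_integral_inner_sq_eq {a b : ℝ} (hab : a ≤ b)
    (hφ : ContinuousOn φ (Icc a b))
    (hθ : ∀ s ∈ Icc a b, HasDerivAt θ (-(γ * ⟪φ s, θ s⟫) • φ s) s) :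
    ‖θ b‖ ^ 2 + 2 * γ * ∫ s in a..b, ⟪φ s, θ s⟫ ^ 2 = ‖θ a‖ ^ 2 := by
  have hu : ContinuousOn (fun s ↦ ⟪φ s, θ s⟫) (Icc a b) :=
    hφ.inner (HasDerivAt.continuousOn hθ)
  have hFTC := integral_eq_sub_of_hasDerivAt
    (fun s hs ↦ hasDerivAt_norm_sq_of_gradient (hθ s (uIcc_of_le hab ▸ hs)))
    (((hu.pow 2).const_mul (-(2 * γ))).intervalIntegrable_of_Icc hab)
  rw [intervalIntegral.integral_const_mul] at hFTC
  linarith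

theorem antitoneOn_norm_of_gradient {a : ℝ} (hγ : 0 ≤ γ) (hφ : ContinuousOn φ (Ici a))
    (hθ : ∀ s ≥ a, HasDerivAt θ (-(γ * ⟪φ s, θ s⟫) • φ s) s) :
    AntitoneOn (‖θ ·‖) (Ici a) := by
  intro s hs t _ hst
  have hsub : Icc s t ⊆ Ici a := fun τ hτ ↦ le_trans hs hτ.1
  have henergy := norm_sq_add_integral_inner_sq_eq hst (hφ.mono hsub)
    (fun τ hτ ↦ hθ τ (hsub hτ))
  have hdiss : 0 ≤ 2 * γ * ∫ τ in s..t, ⟪φ τ, θ τ⟫ ^ 2 :=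
    mul_nonneg (by positivity) (integral_nonneg hst fun _ _ ↦ sq_nonneg _)
  exact (pow_le_pow_iff_left₀ (norm_nonneg _) (norm_nonneg _) two_ne_zero).1 (by linarith)

variable [CompleteSpace E]

theorem norm_sub_le_mul_integral_abs_inner {a b B τ : ℝ} (hγ : 0 ≤ γ)
    (hφ : ContinuousOn φ (Icc a b)) (hφB : ∀ s ∈ Icc a b, ‖φ s‖ ≤ B)
    (hθ : ∀ s ∈ Icc a b, HasDerivAt θ (-(γ * ⟪φ s, θ s⟫) • φ s) s) (hτ : τ ∈ Icc a b) :
    ‖θ τ - θ a‖ ≤ γ * B * ∫ s in a..b, |⟪φ s, θ s⟫| := by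
  have hab : a ≤ b := hτ.1.trans hτ.2
  have hB : 0 ≤ B := (norm_nonneg _).trans (hφB a (left_mem_Icc.2 hab))
  have hsub : Icc a τ ⊆ Icc a b := Icc_subset_Icc_right hτ.2
  have hu : ContinuousOn (fun s ↦ ⟪φ s, θ s⟫) (Icc a b) :=
    hφ.inner (HasDerivAt.continuousOn hθ)
  have hθ' : ContinuousOn (fun s ↦ -(γ * ⟪φ s, θ s⟫) • φ s) (Icc a b) :=
    (continuousOn_const.mul hu).neg.smul hφ
  have hbound : ContinuousOn (fun s ↦ γ * B * |⟪φ s, θ s⟫|) (Icc a b) :=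
    continuousOn_const.mul hu.abs
  calc ‖θ τ - θ a‖ = ‖∫ s in a..τ, -(γ * ⟪φ s, θ s⟫) • φ s‖ := by
        rw [integral_eq_sub_of_hasDerivAt (fun s hs ↦ hθ s (hsub (uIcc_of_le hτ.1 ▸ hs)))
          ((hθ'.mono hsub).intervalIntegrable_of_Icc hτ.1)]
    _ ≤ ∫ s in a..τ, ‖-(γ * ⟪φ s, θ s⟫) • φ s‖ := norm_integral_le_integral_norm hτ.1
    _ ≤ ∫ s in a..τ, γ * B * |⟪φ s, θ s⟫| := by
        refine integral_mono_on hτ.1 ((hθ'.norm.mono hsub).intervalIntegrable_of_Icc hτ.1)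
          ((hbound.mono hsub).intervalIntegrable_of_Icc hτ.1) fun s hs ↦ ?_
        rw [norm_smul, norm_neg, norm_mul, Real.norm_of_nonneg hγ, Real.norm_eq_abs]
        have := hφB s (hsub hs)
        calc γ * |⟪φ s, θ s⟫| * ‖φ s‖ ≤ γ * |⟪φ s, θ s⟫| * B := by gcongr
          _ = γ * B * |⟪φ s, θ s⟫| := by ring
    _ ≤ ∫ s in a..b, γ * B * |⟪φ s, θ s⟫| :=
        integral_mono_interval le_rfl hτ.1 hτ.2
          (Filter.Eventually.of_forall fun _ ↦ by positivity) (hbound.intervalIntegrable_of_Icc hab)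
    _ = γ * B * ∫ s in a..b, |⟪φ s, θ s⟫| := intervalIntegral.integral_const_mul _ _

theorem mul_norm_sq_le_mul_integral_inner_sq {a T B α : ℝ} (hT : 0 ≤ T) (hγ : 0 ≤ γ)
    (hφ : ContinuousOn φ (Icc a (a + T))) (hφB : ∀ s ∈ Icc a (a + T), ‖φ s‖ ≤ B)
    (hθ : ∀ s ∈ Icc a (a + T), HasDerivAt θ (-(γ * ⟪φ s, θ s⟫) • φ s) s)
    (hPE : α * ‖θ a‖ ^ 2 ≤ ∫ s in a..a + T, ⟪φ s, θ a⟫ ^ 2) :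
    α * ‖θ a‖ ^ 2 ≤ (2 + 2 * γ ^ 2 * B ^ 4 * T ^ 2) * ∫ s in a..a + T, ⟪φ s, θ s⟫ ^ 2 := by
  have hab : a ≤ a + T := le_add_of_nonneg_right hT
  have hu : ContinuousOn (fun s ↦ ⟪φ s, θ s⟫) (Icc a (a + T)) :=
    hφ.inner (HasDerivAt.continuousOn hθ)
  have hu2 : IntervalIntegrable (fun s ↦ ⟪φ s, θ s⟫ ^ 2) volume a (a + T) :=
    (hu.pow 2).intervalIntegrable_of_Icc hab
  set S := ∫ s in a..a + T, ⟪φ s, θ s⟫ ^ 2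
  have hCS : (∫ s in a..a + T, |⟪φ s, θ s⟫|) ^ 2 ≤ T * S := by
    simpa only [sq_abs, add_sub_cancel_left] using sq_intervalIntegral_le_mul_integral_sq hab
      (hu.abs.intervalIntegrable_of_Icc hab) ((hu.abs.pow 2).intervalIntegrable_of_Icc hab)
  have hdrift : ∀ τ ∈ Icc a (a + T),
      ⟪φ τ, θ τ - θ a⟫ ^ 2 ≤ B ^ 2 * (γ ^ 2 * B ^ 2 * (T * S)) := by
    intro τ hτ
    have hdisp := norm_sub_le_mul_integral_abs_inner hγ hφ hφB hθ hτ
    have hB : 0 ≤ B := (norm_nonneg _).trans (hφB τ hτ)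
    calc ⟪φ τ, θ τ - θ a⟫ ^ 2 = |⟪φ τ, θ τ - θ a⟫| ^ 2 := (sq_abs _).symm
      _ ≤ (‖φ τ‖ * ‖θ τ - θ a‖) ^ 2 := by gcongr; exact abs_real_inner_le_norm _ _
      _ ≤ (B * (γ * B * ∫ s in a..a + T, |⟪φ s, θ s⟫|)) ^ 2 :=
          pow_le_pow_left₀ (by positivity) (mul_le_mul (hφB τ hτ) hdisp (norm_nonneg _) hB) 2
      _ = B ^ 2 * (γ ^ 2 * B ^ 2 * (∫ s in a..a + T, |⟪φ s, θ s⟫|) ^ 2) := by ring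
      _ ≤ B ^ 2 * (γ ^ 2 * B ^ 2 * (T * S)) := by gcongr
  have hpt : ∀ τ ∈ Icc a (a + T),
      ⟪φ τ, θ a⟫ ^ 2 ≤ 2 * ⟪φ τ, θ τ⟫ ^ 2 + 2 * (γ ^ 2 * B ^ 4 * T * S) := by
    intro τ hτ
    have hsplit : ⟪φ τ, θ a⟫ = ⟪φ τ, θ τ⟫ - ⟪φ τ, θ τ - θ a⟫ := by rw [inner_sub_right]; ring
    rw [hsplit]
    nlinarith [hdrift τ hτ, sq_nonneg (⟪φ τ, θ τ⟫ + ⟪φ τ, θ τ - θ a⟫)]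
  calc α * ‖θ a‖ ^ 2 ≤ ∫ s in a..a + T, ⟪φ s, θ a⟫ ^ 2 := hPE
    _ ≤ ∫ s in a..a + T, (2 * ⟪φ s, θ s⟫ ^ 2 + 2 * (γ ^ 2 * B ^ 4 * T * S)) :=
        integral_mono_on hab
          (((hφ.inner continuousOn_const).pow 2).intervalIntegrable_of_Icc hab)
          ((hu2.const_mul 2).add intervalIntegrable_const) hpt
    _ = (2 + 2 * γ ^ 2 * B ^ 4 * T ^ 2) * S := by
        rw [integral_add (hu2.const_mul 2) intervalIntegrable_const,
          intervalIntegral.integral_const_mul, intervalIntegral.integral_const, smul_eq_mul]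
        ring

theorem norm_add_le_windowContraction_mul {a T B α : ℝ} (hT : 0 ≤ T) (hγ : 0 ≤ γ) (hα : 0 ≤ α)
    (hφ : ContinuousOn φ (Icc a (a + T))) (hφB : ∀ s ∈ Icc a (a + T), ‖φ s‖ ≤ B)
    (hθ : ∀ s ∈ Icc a (a + T), HasDerivAt θ (-(γ * ⟪φ s, θ s⟫) • φ s) s)
    (hPE : α * ‖θ a‖ ^ 2 ≤ ∫ s in a..a + T, ⟪φ s, θ a⟫ ^ 2) :
    ‖θ (a + T)‖ ≤ windowContraction γ α B T * ‖θ a‖ := by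
  set c := 2 + 2 * γ ^ 2 * B ^ 4 * T ^ 2
  set S := ∫ s in a..a + T, ⟪φ s, θ s⟫ ^ 2
  have henergy := norm_sq_add_integral_inner_sq_eq (le_add_of_nonneg_right hT) hφ hθ
  have hexc : α * ‖θ a‖ ^ 2 ≤ c * S := mul_norm_sq_le_mul_integral_inner_sq hT hγ hφ hφB hθ hPE
  have hS : 0 ≤ S := integral_nonneg (le_add_of_nonneg_right hT) fun _ _ ↦ sq_nonneg _
  have hc : 0 < c := by positivity
  have hdecay : (c + 2 * γ * α) * ‖θ (a + T)‖ ^ 2 ≤ c * ‖θ a‖ ^ 2 := by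
    have h1 : 2 * γ * α * ‖θ (a + T)‖ ^ 2 ≤ 2 * γ * α * ‖θ a‖ ^ 2 :=
      mul_le_mul_of_nonneg_left (by nlinarith) (by positivity)
    have h2 : 2 * γ * (α * ‖θ a‖ ^ 2) ≤ 2 * γ * (c * S) :=
      mul_le_mul_of_nonneg_left hexc (by positivity)
    nlinarith
  rw [windowContraction, ← Real.sqrt_sq (norm_nonneg (θ a)), ← Real.sqrt_mul (by positivity),
    Real.le_sqrt (norm_nonneg _) (by positivity), div_mul_eq_mul_div, le_div_iff₀ (by positivity)]
  linarith

end GradientFlow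

theorem pe_implies_exponential_stability_general
    (n : ℕ) (γ B : ℝ) (hγ : 0 < γ)
    (φ : ℝ → EuclideanSpace ℝ (Fin n)) (hφ : ContinuousOn φ (Set.Ici 0))
    (hφB : ∀ t ≥ (0:ℝ), ‖φ t‖ ≤ B)
    (hPE : ∃ α₁ > (0:ℝ), ∃ T > (0:ℝ), ∀ t ≥ (0:ℝ),
      Matrix.PosSemidef
        ((Matrix.of fun i j => ∫ τ in t..t + T, φ τ i * φ τ j) -
          α₁ • (1 : Matrix (Fin n) (Fin n) ℝ))) :
    ∃ ρ > (0:ℝ), ∃ lam > (0:ℝ),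
      ∀ tθ : ℝ → EuclideanSpace ℝ (Fin n),
        (∀ t ≥ (0:ℝ), HasDerivAt tθ (-(γ * ⟪φ t, tθ t⟫) • φ t) t) →
        ∀ t₀ t : ℝ, 0 ≤ t₀ → t₀ ≤ t →
          ‖tθ t‖ ≤ ρ * Real.exp (-lam * (t - t₀)) * ‖tθ t₀‖ := by
  obtain ⟨α, hα, T, hT, hPE⟩ := hPE
  set q := windowContraction γ α B T
  have hq0 : 0 < q := windowContraction_pos hγ.le hα.le
  have hq1 : q < 1 := windowContraction_lt_one hγ hα
  refine ⟨q⁻¹, inv_pos.2 hq0, Real.log q⁻¹ / T,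
    div_pos (Real.log_pos ((one_lt_inv₀ hq0).2 hq1)) hT, fun θ hθ t₀ t ht₀ ht ↦ ?_⟩
  have hwindow : ∀ s ≥ 0, ‖θ (s + T)‖ ≤ q * ‖θ s‖ := by
    intro s hs
    have hsub : Icc s (s + T) ⊆ Ici 0 := fun τ hτ ↦ hs.trans hτ.1
    refine norm_add_le_windowContraction_mul hT.le hγ.le hα.le (hφ.mono hsub)
      (fun τ hτ ↦ hφB τ (hsub hτ)) (fun τ hτ ↦ hθ τ (hsub hτ)) ?_
    exact mul_norm_sq_le_integral_inner_sq_of_posSemidef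
      (hφ.mono (uIcc_of_le (le_add_of_nonneg_right hT.le) ▸ hsub)) (hPE s hs) (θ s)
  exact (antitoneOn_norm_of_gradient hγ.le hφ hθ).le_mul_exp_of_add_le_mul hT hq0 hq1.le
    hwindow ht₀ ht (norm_nonneg _)

theorem pe_implies_exponential_stability
    (n : ℕ) (hn : 1 ≤ n) (γ B : ℝ) (hγ : 0 < γ) (hB : 0 < B)
    (φ : ℝ → EuclideanSpace ℝ (Fin n)) (hφ : ContinuousOn φ (Set.Ici 0))
    (hφB : ∀ t ≥ (0:ℝ), ‖φ t‖ ≤ B)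
    (hPE : ∃ α₁ > (0:ℝ), ∃ T > (0:ℝ), ∀ t ≥ (0:ℝ),
      Matrix.PosSemidef
        ((Matrix.of fun i j => ∫ τ in t..t + T, φ τ i * φ τ j) -
          α₁ • (1 : Matrix (Fin n) (Fin n) ℝ))) :
    ∃ ρ > (0:ℝ), ∃ lam > (0:ℝ),
      ∀ tθ : ℝ → EuclideanSpace ℝ (Fin n),
        (∀ t ≥ (0:ℝ), HasDerivAt tθ (-(γ * ⟪φ t, tθ t⟫) • φ t) t) →
        ∀ t₀ t : ℝ, 0 ≤ t₀ → t₀ ≤ t →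
          ‖tθ t‖ ≤ ρ * Real.exp (-lam * (t - t₀)) * ‖tθ t₀‖ :=
  pe_implies_exponential_stability_general n γ B hγ φ hφ hφB hPE
end

section
/- Let a > 0, let H be an m×m real symmetric positive semidefinite matrix, let y : [0,∞) → ℝᵐ be differentiable with ‖ẏ(t)‖ ≤ M₂ for all t, and let x : [0,∞) → ℝᵐ be differentiable with ‖ẋ(t)‖ ≤ ε for all t. Define G(t) = e^{−a t} ∫₀ᵗ ( ∫₀^{τ} e^{a s} ẏ(s) ds )ᵀ H ẋ(τ) dτ. Then for all t ≥ 0, |G(t)| ≤ M₂ λ_max(H) ε / a², where λ_max(H) denotes the largest eigenvalue (operator norm) of H. -/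
open scoped RealInnerProductSpace
open Real Set

/-!
Each integration of a function bounded by `C e^{a s}` over `[0, t]` costs a factor `1 / a` and
keeps the growth `e^{a t}`. The inner integral is thus at most `M₂ e^{a τ} / a`, the outer
integrand at most `(M₂ ‖H‖ ε / a) e^{a τ}`, the outer integral at most `M₂ ‖H‖ ε e^{a t} / a²`,
and the prefactor `e^{-a t}` cancels the growth.
-/

lemma integral_exp_mul_left {a : ℝ} (ha : a ≠ 0) (t : ℝ) :
    ∫ s in (0 : ℝ)..t, exp (a * s) = (exp (a * t) - 1) / a := by
  simp [intervalIntegral.integral_comp_mul_left (fun s => exp s) ha, integral_exp, div_eq_inv_mul]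

lemma norm_integral_le_mul_exp_div {E : Type*} [NormedAddCommGroup E] [NormedSpace ℝ E]
    {a C t : ℝ} {g : ℝ → E} (ha : 0 < a) (hC : 0 ≤ C) (ht : 0 ≤ t)
    (hg : ∀ s ∈ Ioc 0 t, ‖g s‖ ≤ C * exp (a * s)) :
    ‖∫ s in (0 : ℝ)..t, g s‖ ≤ C * exp (a * t) / a := by
  have hint : IntervalIntegrable (fun s => C * exp (a * s)) MeasureTheory.volume 0 t := by
    apply Continuous.intervalIntegrable; fun_prop
  calc ‖∫ s in (0 : ℝ)..t, g s‖ ≤ ∫ s in (0 : ℝ)..t, C * exp (a * s) :=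
        intervalIntegral.norm_integral_le_of_norm_le ht (.of_forall hg) hint
    _ = C * (exp (a * t) - 1) / a := by
        rw [intervalIntegral.integral_const_mul, integral_exp_mul_left ha.ne', mul_div_assoc]
    _ ≤ C * exp (a * t) / a := by gcongr; linarith

theorem drift_term_G_bound_general
    (m : ℕ) (a M₂ ε : ℝ) (ha : 0 < a)
    (H : Matrix (Fin m) (Fin m) ℝ)
    (y' : ℝ → EuclideanSpace ℝ (Fin m))
    (hyM : ∀ t ≥ (0:ℝ), ‖y' t‖ ≤ M₂)
    (x' : ℝ → EuclideanSpace ℝ (Fin m))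
    (hxε : ∀ t ≥ (0:ℝ), ‖x' t‖ ≤ ε)
    (G : ℝ → ℝ)
    (hG : ∀ t, G t = Real.exp (-a * t) * ∫ τ in (0:ℝ)..t,
      ⟪(∫ s in (0:ℝ)..τ, Real.exp (a * s) • y' s), Matrix.toEuclideanLin H (x' τ)⟫) :
    ∀ t ≥ (0:ℝ), |G t| ≤ M₂ * ‖Matrix.toEuclideanCLM (𝕜 := ℝ) H‖ * ε / a ^ 2 := by
  intro t ht
  set K := Matrix.toEuclideanCLM (𝕜 := ℝ) H
  have hM₂ : 0 ≤ M₂ := (norm_nonneg _).trans (hyM 0 le_rfl)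
  have hε : 0 ≤ ε := (norm_nonneg _).trans (hxε 0 le_rfl)
  have hC : 0 ≤ M₂ * ‖K‖ * ε / a := by positivity
  have inner_bound : ∀ τ ∈ Ioc 0 t,
      ‖∫ s in (0:ℝ)..τ, exp (a * s) • y' s‖ ≤ M₂ * exp (a * τ) / a := fun τ hτ =>
    norm_integral_le_mul_exp_div ha hM₂ hτ.1.le fun s hs => by
      rw [norm_smul, norm_of_nonneg (exp_pos _).le, mul_comm]
      exact mul_le_mul_of_nonneg_right (hyM s hs.1.le) (exp_pos _).le
  have outer_bound : ‖∫ τ in (0:ℝ)..t, ⟪∫ s in (0:ℝ)..τ, exp (a * s) • y' s,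
      Matrix.toEuclideanLin H (x' τ)⟫‖ ≤ M₂ * ‖K‖ * ε / a * exp (a * t) / a :=
    norm_integral_le_mul_exp_div ha hC ht fun τ hτ =>
      calc _ ≤ ‖∫ s in (0:ℝ)..τ, exp (a * s) • y' s‖ * ‖K (x' τ)‖ := norm_inner_le_norm _ _
        _ ≤ M₂ * exp (a * τ) / a * (‖K‖ * ε) := by
            gcongr
            exacts [inner_bound τ hτ, K.le_opNorm_of_le (hxε τ hτ.1.le)]
        _ = M₂ * ‖K‖ * ε / a * exp (a * τ) := by ring
  calc |G t| = exp (-a * t) * ‖∫ τ in (0:ℝ)..t, ⟪∫ s in (0:ℝ)..τ, exp (a * s) • y' s,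
        Matrix.toEuclideanLin H (x' τ)⟫‖ := by
        rw [hG, abs_mul, abs_of_pos (exp_pos _), Real.norm_eq_abs]
    _ ≤ exp (-a * t) * (M₂ * ‖K‖ * ε / a * exp (a * t) / a) := by gcongr
    _ = M₂ * ‖K‖ * ε / a ^ 2 := by
        rw [neg_mul, exp_neg]; field_simp

theorem drift_term_G_bound
    (m : ℕ) (a M₂ ε : ℝ) (ha : 0 < a)
    (H : Matrix (Fin m) (Fin m) ℝ) (hH : H.PosSemidef)
    (y y' : ℝ → EuclideanSpace ℝ (Fin m))
    (hy : ∀ t ≥ (0:ℝ), HasDerivAt y (y' t) t)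
    (hyM : ∀ t ≥ (0:ℝ), ‖y' t‖ ≤ M₂)
    (x x' : ℝ → EuclideanSpace ℝ (Fin m))
    (hx : ∀ t ≥ (0:ℝ), HasDerivAt x (x' t) t)
    (hxε : ∀ t ≥ (0:ℝ), ‖x' t‖ ≤ ε)
    (G : ℝ → ℝ)
    (hG : ∀ t, G t = Real.exp (-a * t) * ∫ τ in (0:ℝ)..t,
      ⟪(∫ s in (0:ℝ)..τ, Real.exp (a * s) • y' s), Matrix.toEuclideanLin H (x' τ)⟫) :
    ∀ t ≥ (0:ℝ), |G t| ≤ M₂ * ‖Matrix.toEuclideanCLM (𝕜 := ℝ) H‖ * ε / a ^ 2 :=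
  drift_term_G_bound_general m a M₂ ε ha H y' hyM x' hxε G hG
end

section
/- Let a > 0, let H be an m×m real symmetric positive definite matrix, let c₁ ∈ ℝ, let y : [0,∞) → ℝᵐ be twice differentiable with ‖y(t)‖ ≤ M₁, ‖ẏ(t)‖ ≤ M₂ and ‖ÿ(t)‖ ≤ M₃ for all t, and let x : [0,∞) → ℝᵐ be differentiable with ‖x(t)‖ ≤ M₄ and ‖ẋ(t)‖ ≤ ε for all t. Define F(t) = c₁ − (1/2)(y(t) − x(t))ᵀH(y(t) − x(t)), the regressor Ψ(t) ∈ ℝ^{m(m+3)/2} with entries (−(1/2)y₁(t)², −y₁(t)y₂(t), …, −y₁(t)y_m(t), −(1/2)y₂(t)², …, −(1/2)y_m(t)², y₁(t), …, y_m(t)), and the time-varying parameter vector θ*(t) ∈ ℝ^{m(m+3)/2} with entries (H₁₁, H₁₂, …, H₁m, H₂₂, …, H_{mm}, (H x(t))₁, …, (H x(t))_m). Define the filtered signals z(t) = F(t) − a∫₀ᵗ e^{−a(t−τ)} F(τ) dτ and φ(t) = Ψ(t) − a∫₀ᵗ e^{−a(t−τ)} Ψ(τ) dτ. Then there exist a constant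 K₁ > 0 depending only on M₁, M₂, M₄, λ_max(H) and a, and constants M ≥ 0, λ > 0, such that for all t ≥ 0, |z(t) − θ*(t)ᵀ φ(t)| ≤ K₁ ε + M e^{−λ t}. -/
/-!
Symmetry of `H` gives the exact parametrisation `F(τ) = θ*(τ)ᵀΨ(τ) + c₁ - ½ x(τ)ᵀH x(τ)`, in which
only the linear block `H x(τ)` of `θ*` drifts. The filter is linear, so `z(t) - θ*(t)ᵀφ(t)` is the
filtered residual `r(τ) = F(τ) - θ*(t)ᵀΨ(τ) = c₁ - ½ x(τ)ᵀH x(τ) + (H (x(τ) - x(t)))ᵀ y(τ)`.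
Here `r(t)` is bounded and `|r(t) - r(τ)| ≤ ‖H‖ (M₁ + M₄) ε (t - τ)`. Writing the filter output as
`r(t) e^{-at} + a ∫₀ᵗ e^{-a(t-τ)} (r(t) - r(τ)) dτ` and using `∫₀^∞ s e^{-as} ds = 1/a²` gives
the bound with `K₁ = ‖H‖ (|M₁| + |M₄|)/a + 1`, `M = |c₁| + ‖H‖ M₄²/2` and `λ = a`.
-/

open scoped RealInnerProductSpace

/-- Index set for the parameter/regressor vectors in `ℝ^{m(m+3)/2}`:
the `m(m+1)/2` upper-triangular positions of the Hessian followed by `m`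
positions for the linear part. -/
abbrev SymIdx (m : ℕ) := {p : Fin m × Fin m // p.1 ≤ p.2} ⊕ Fin m

open Real intervalIntegral MeasureTheory

-- the output `u - a ξ` of `ξ' = -a ξ + u`, `ξ 0 = 0`, i.e. of the high-pass filter `s / (s + a)`
noncomputable def highPass (a : ℝ) (u : ℝ → ℝ) (t : ℝ) : ℝ :=
  u t - a * ∫ τ in (0:ℝ)..t, exp (-a * (t - τ)) * u τ

section HighPass

variable {a t : ℝ} {u v : ℝ → ℝ}

lemma IntervalIntegrable.exp_kernel_mul (a : ℝ) (hu : IntervalIntegrable u volume 0 t) :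
    IntervalIntegrable (fun τ => exp (-a * (t - τ)) * u τ) volume 0 t :=
  hu.continuousOn_mul (by fun_prop)

lemma highPass_sub (hu : IntervalIntegrable u volume 0 t) (hv : IntervalIntegrable v volume 0 t) :
    highPass a (fun τ => u τ - v τ) t = highPass a u t - highPass a v t := by
  have hsub := integral_sub (hu.exp_kernel_mul a) (hv.exp_kernel_mul a)
  simp only [← mul_sub] at hsub
  rw [highPass, highPass, highPass, hsub]
  ring

lemma highPass_sum {ι : Type*} (s : Finset ι) (c : ι → ℝ) {w : ι → ℝ → ℝ}
    (hw : ∀ k ∈ s, IntervalIntegrable (w k) volume 0 t) :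
    highPass a (fun τ => ∑ k ∈ s, c k * w k τ) t = ∑ k ∈ s, c k * highPass a (w k) t := by
  have hint : ∫ τ in (0:ℝ)..t, exp (-a * (t - τ)) * ∑ k ∈ s, c k * w k τ
      = ∑ k ∈ s, c k * ∫ τ in (0:ℝ)..t, exp (-a * (t - τ)) * w k τ := by
    simp_rw [Finset.mul_sum, mul_left_comm _ (c _), ← intervalIntegral.integral_const_mul]
    exact integral_finsetSum fun k hk => ((hw k hk).exp_kernel_mul a).const_mul (c k)
  rw [highPass, hint, Finset.mul_sum, ← Finset.sum_sub_distrib]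
  exact Finset.sum_congr rfl fun k _ => by rw [highPass]; ring

lemma highPass_sub_inner {ι : Type*} [Fintype ι] {F : ℝ → ℝ} {Ψ : ℝ → EuclideanSpace ℝ ι}
    {θ φ : EuclideanSpace ℝ ι} (hF : ContinuousOn F (Set.uIcc 0 t))
    (hΨ : ContinuousOn Ψ (Set.uIcc 0 t)) (hφ : ∀ k, φ k = highPass a (fun τ => Ψ τ k) t) :
    highPass a F t - ⟪θ, φ⟫ = highPass a (fun τ => F τ - ⟪θ, Ψ τ⟫) t := by
  have hΨk : ∀ k, ContinuousOn (fun τ => Ψ τ k) (Set.uIcc 0 t) := fun k =>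
    ((PiLp.continuous_apply 2 _ k).comp_continuousOn hΨ)
  have hinner : ∀ τ, ⟪θ, Ψ τ⟫ = ∑ k, θ k * Ψ τ k := fun τ => by
    simp only [EuclideanSpace.inner_eq_star_dotProduct, dotProduct, star_trivial, mul_comm]
  have hθφ : ⟪θ, φ⟫ = highPass a (fun τ => ⟪θ, Ψ τ⟫) t := by
    simp only [hinner]
    rw [highPass_sum _ _ fun k _ => (hΨk k).intervalIntegrable]
    simp only [EuclideanSpace.inner_eq_star_dotProduct, dotProduct, star_trivial, hφ, mul_comm]
  rw [hθφ, highPass_sub hF.intervalIntegrable]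
  simp only [hinner]
  exact (continuousOn_finsetSum _ fun k _ => (hΨk k).const_smul (θ k)).intervalIntegrable

lemma integral_exp_kernel (ha : a ≠ 0) :
    ∫ τ in (0:ℝ)..t, exp (-a * (t - τ)) = (1 - exp (-a * t)) / a := by
  have hderiv : ∀ τ ∈ Set.uIcc 0 t,
      HasDerivAt (fun τ => exp (-a * (t - τ)) / a) (exp (-a * (t - τ))) τ := by
    intro τ _
    refine ((((hasDerivAt_id' τ).const_sub t).const_mul (-a)).exp.div_const a).congr_deriv ?_
    field_simp
  rw [integral_eq_sub_of_hasDerivAt hderiv ((by fun_prop : Continuous _).intervalIntegrable _ _)]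
  simp only [sub_self, mul_zero, exp_zero, sub_zero]
  ring

lemma integral_ramp_exp_kernel_le (ha : 0 < a) (ht : 0 ≤ t) :
    ∫ τ in (0:ℝ)..t, (t - τ) * exp (-a * (t - τ)) ≤ 1 / a ^ 2 := by
  have hderiv : ∀ τ ∈ Set.uIcc 0 t,
      HasDerivAt (fun τ => ((t - τ) / a + 1 / a ^ 2) * exp (-a * (t - τ)))
        ((t - τ) * exp (-a * (t - τ))) τ := by
    intro τ _
    refine (((((hasDerivAt_id' τ).const_sub t).div_const a).add_const (1 / a ^ 2)).mul
      (((hasDerivAt_id' τ).const_sub t).const_mul (-a)).exp).congr_deriv ?_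
    field_simp
    ring
  rw [integral_eq_sub_of_hasDerivAt hderiv ((by fun_prop : Continuous _).intervalIntegrable _ _)]
  simp only [sub_self, zero_div, zero_add, mul_zero, exp_zero, mul_one, sub_zero]
  have : 0 ≤ (t / a + 1 / a ^ 2) * exp (-a * t) := by positivity
  linarith

lemma highPass_eq (ha : a ≠ 0) (hu : IntervalIntegrable u volume 0 t) :
    highPass a u t
      = u t * exp (-a * t) + a * ∫ τ in (0:ℝ)..t, exp (-a * (t - τ)) * (u t - u τ) := by
  have hsplit : ∫ τ in (0:ℝ)..t, exp (-a * (t - τ)) * (u t - u τ)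
      = u t * (∫ τ in (0:ℝ)..t, exp (-a * (t - τ)))
        - ∫ τ in (0:ℝ)..t, exp (-a * (t - τ)) * u τ := by
    rw [← intervalIntegral.integral_const_mul, ← integral_sub
      ((by fun_prop : Continuous fun τ => u t * exp (-a * (t - τ))).intervalIntegrable _ _)
      (hu.exp_kernel_mul a)]
    exact integral_congr fun τ _ => by ring
  rw [highPass, hsplit, integral_exp_kernel ha]
  field_simp
  ring

lemma abs_highPass_le (ha : 0 < a) (ht : 0 ≤ t) (hu : IntervalIntegrable u volume 0 t)
    {B L : ℝ} (hL : 0 ≤ L) (hB : |u t| ≤ B)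
    (hlip : ∀ τ ∈ Set.Icc 0 t, |u t - u τ| ≤ L * (t - τ)) :
    |highPass a u t| ≤ L / a + B * exp (-a * t) := by
  have hint : |∫ τ in (0:ℝ)..t, exp (-a * (t - τ)) * (u t - u τ)| ≤ L / a ^ 2 := calc
    _ ≤ ∫ τ in (0:ℝ)..t, L * ((t - τ) * exp (-a * (t - τ))) := by
      rw [← Real.norm_eq_abs]
      refine norm_integral_le_of_norm_le ht (ae_of_all _ fun τ hτ => ?_)
        ((by fun_prop : Continuous fun τ => L * ((t - τ) * exp (-a * (t - τ)))).intervalIntegrable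
          _ _)
      rw [Real.norm_eq_abs, abs_mul, abs_of_pos (exp_pos _)]
      calc exp (-a * (t - τ)) * |u t - u τ| ≤ exp (-a * (t - τ)) * (L * (t - τ)) := by
            gcongr; exact hlip τ (Set.Ioc_subset_Icc_self hτ)
        _ = L * ((t - τ) * exp (-a * (t - τ))) := by ring
    _ = L * ∫ τ in (0:ℝ)..t, (t - τ) * exp (-a * (t - τ)) :=
      intervalIntegral.integral_const_mul _ _
    _ ≤ L * (1 / a ^ 2) := by gcongr; exact integral_ramp_exp_kernel_le ha ht
    _ = L / a ^ 2 := by ring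
  rw [highPass_eq ha.ne' hu]
  calc _ ≤ |u t| * exp (-a * t) + a * |∫ τ in (0:ℝ)..t, exp (-a * (t - τ)) * (u t - u τ)| := by
        refine (abs_add_le _ _).trans_eq ?_
        rw [abs_mul, abs_mul, abs_of_pos (exp_pos _), abs_of_pos ha]
    _ ≤ B * exp (-a * t) + a * (L / a ^ 2) := by gcongr
    _ = L / a + B * exp (-a * t) := by field_simp; ring

end HighPass

section QuadraticForm

variable {E : Type*} [NormedAddCommGroup E] [InnerProductSpace ℝ E] (T : E →L[ℝ] E)

lemma abs_inner_map_self_sub_le (u w : E) :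
    |⟪u, T u⟫ - ⟪w, T w⟫| ≤ ‖T‖ * (‖u‖ + ‖w‖) * ‖u - w‖ := by
  have hsplit : ⟪u, T u⟫ - ⟪w, T w⟫ = ⟪u - w, T u⟫ + ⟪w, T (u - w)⟫ := by
    rw [map_sub, inner_sub_left, inner_sub_right]; ring
  rw [hsplit]
  calc _ ≤ ‖u - w‖ * ‖T u‖ + ‖w‖ * ‖T (u - w)‖ :=
        (abs_add_le _ _).trans
          (add_le_add (abs_real_inner_le_norm _ _) (abs_real_inner_le_norm _ _))
    _ ≤ ‖u - w‖ * (‖T‖ * ‖u‖) + ‖w‖ * (‖T‖ * ‖u - w‖) := by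
        gcongr <;> exact T.le_opNorm _
    _ = ‖T‖ * (‖u‖ + ‖w‖) * ‖u - w‖ := by ring

lemma abs_sub_half_inner_map_self_le (c : ℝ) {u : E} {R : ℝ} (hu : ‖u‖ ≤ R) :
    |c - (1/2) * ⟪u, T u⟫| ≤ |c| + ‖T‖ * R ^ 2 / 2 := by
  have hq : |⟪u, T u⟫| ≤ ‖T‖ * R ^ 2 := calc
    _ ≤ ‖u‖ * (‖T‖ * ‖u‖) := (abs_real_inner_le_norm _ _).trans (by gcongr; exact T.le_opNorm u)
    _ ≤ R * (‖T‖ * R) := by have := (norm_nonneg u).trans hu; gcongr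
    _ = ‖T‖ * R ^ 2 := by ring
  calc _ ≤ |c| + (1/2) * |⟪u, T u⟫| := by
        refine (abs_sub _ _).trans_eq ?_
        rw [abs_mul, abs_of_pos (by norm_num : (0:ℝ) < 1 / 2)]
    _ ≤ |c| + ‖T‖ * R ^ 2 / 2 := by linarith

lemma abs_drift_residual_sub_le (c : ℝ) {u w y : E} {R Y : ℝ} (hu : ‖u‖ ≤ R) (hw : ‖w‖ ≤ R)
    (hy : ‖y‖ ≤ Y) :
    |(c - (1/2) * ⟪w, T w⟫) - (c - (1/2) * ⟪u, T u⟫ + ⟪T (u - w), y⟫)|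
      ≤ ‖T‖ * (Y + R) * ‖u - w‖ := by
  have hq := abs_inner_map_self_sub_le T u w
  have hlin : |⟪T (u - w), y⟫| ≤ ‖T‖ * ‖u - w‖ * Y :=
    (abs_real_inner_le_norm _ _).trans (by gcongr; exact T.le_opNorm _)
  calc _ = |(1/2) * (⟪u, T u⟫ - ⟪w, T w⟫) - ⟪T (u - w), y⟫| := by ring_nf
    _ ≤ (1/2) * (‖T‖ * (‖u‖ + ‖w‖) * ‖u - w‖) + ‖T‖ * ‖u - w‖ * Y := by
        refine (abs_sub _ _).trans (add_le_add ?_ hlin)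
        rw [abs_mul, abs_of_pos (by norm_num : (0:ℝ) < 1 / 2)]
        gcongr
    _ ≤ (1/2) * (‖T‖ * (R + R) * ‖u - w‖) + ‖T‖ * ‖u - w‖ * Y := by gcongr
    _ = ‖T‖ * (Y + R) * ‖u - w‖ := by ring

end QuadraticForm

lemma Fintype.sum_upper_triangle_of_symm {ι M : Type*} [Fintype ι] [LinearOrder ι]
    [AddCommMonoid M] (g : ι → ι → M) (hg : ∀ i j, g i j = g j i) :
    ∑ p : {p : ι × ι // p.1 ≤ p.2},
      (if p.1.1 = p.1.2 then g p.1.1 p.1.2 else 2 • g p.1.1 p.1.2) = ∑ i, ∑ j, g i j := by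
  have hlt : ∑ i, ∑ j, (if j < i then g i j else 0) = ∑ i, ∑ j, if i < j then g i j else 0 := by
    rw [Finset.sum_comm]
    simp_rw [hg]
  rw [← Finset.sum_subtype (Finset.univ.filter fun q : ι × ι => q.1 ≤ q.2) (by simp)
      (fun q => if q.1 = q.2 then g q.1 q.2 else 2 • g q.1 q.2),
    Finset.sum_filter, Fintype.sum_prod_type]
  calc _ = ∑ i, ∑ j, ((if i ≤ j then g i j else 0) + if i < j then g i j else 0) := by
        refine Finset.sum_congr rfl fun i _ => Finset.sum_congr rfl fun j _ => ?_
        rcases lt_trichotomy i j with h | rfl | h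
        · simp [h.le, h.ne, h, two_nsmul]
        · simp
        · simp [not_le.mpr h, not_lt.mpr h.le]
    _ = ∑ i, ∑ j, ((if i ≤ j then g i j else 0) + if j < i then g i j else 0) := by
        simp only [Finset.sum_add_distrib, hlt]
    _ = ∑ i, ∑ j, g i j := by
        refine Finset.sum_congr rfl fun i _ => Finset.sum_congr rfl fun j _ => ?_
        by_cases h : i ≤ j
        · simp [h, not_lt.mpr h]
        · simp [h, not_le.mp h]

section QuadraticModel

variable {m : ℕ}

noncomputable def quadRegressor (v : EuclideanSpace ℝ (Fin m)) : EuclideanSpace ℝ (SymIdx m) :=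
  WithLp.toLp 2 <| Sum.elim
    (fun p => if p.1.1 = p.1.2 then -(1/2) * v p.1.1 ^ 2 else -(v p.1.1 * v p.1.2)) fun i => v i

noncomputable def quadParam (H : Matrix (Fin m) (Fin m) ℝ) (w : EuclideanSpace ℝ (Fin m)) :
    EuclideanSpace ℝ (SymIdx m) :=
  WithLp.toLp 2 <| Sum.elim (fun p => H p.1.1 p.1.2) fun i => Matrix.toEuclideanLin H w i

lemma continuous_quadRegressor : Continuous (quadRegressor (m := m)) := by
  refine (PiLp.continuous_toLp 2 _).comp (continuous_pi fun k => ?_)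
  rcases k with p | i
  · simp only [Sum.elim_inl]
    split_ifs <;> fun_prop
  · simp only [Sum.elim_inr]
    fun_prop

lemma inner_toEuclideanLin_self (H : Matrix (Fin m) (Fin m) ℝ) (v : EuclideanSpace ℝ (Fin m)) :
    ⟪v, Matrix.toEuclideanLin H v⟫ = ∑ i, ∑ j, H i j * v i * v j := by
  simp only [EuclideanSpace.inner_eq_star_dotProduct, Matrix.toLpLin_apply, Matrix.mulVec,
    dotProduct, Finset.sum_mul, star_trivial]
  exact Finset.sum_congr rfl fun i _ => Finset.sum_congr rfl fun j _ => by ring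

lemma inner_quadParam_quadRegressor {H : Matrix (Fin m) (Fin m) ℝ} (hH : H.IsHermitian)
    (v w : EuclideanSpace ℝ (Fin m)) :
    ⟪quadParam H w, quadRegressor v⟫
      = -(1/2) * ⟪v, Matrix.toEuclideanLin H v⟫ + ⟪Matrix.toEuclideanLin H w, v⟫ := by
  have hupper := Fintype.sum_upper_triangle_of_symm (fun i j => H i j * v i * v j) fun i j => by
    rw [← hH.apply i j, star_trivial]; ring
  rw [EuclideanSpace.inner_eq_star_dotProduct, dotProduct, Fintype.sum_sum_type,
    inner_toEuclideanLin_self, ← hupper, Finset.mul_sum]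
  congr 1
  refine Finset.sum_congr rfl fun p _ => ?_
  simp only [quadRegressor, quadParam, Sum.elim_inl, star_trivial, nsmul_eq_mul]
  split_ifs with h
  · rw [h]; ring
  · push_cast; ring

lemma quadModel_sub_inner_quadParam {H : Matrix (Fin m) (Fin m) ℝ} (hH : H.IsHermitian) (c : ℝ)
    (v w w' : EuclideanSpace ℝ (Fin m)) :
    c - (1/2) * ⟪v - w, Matrix.toEuclideanLin H (v - w)⟫ - ⟪quadParam H w', quadRegressor v⟫
      = c - (1/2) * ⟪w, Matrix.toEuclideanLin H w⟫ + ⟪Matrix.toEuclideanLin H (w - w'), v⟫ := by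
  have hsymm : ⟪w, Matrix.toEuclideanLin H v⟫ = ⟪Matrix.toEuclideanLin H w, v⟫ :=
    (Matrix.isSymmetric_toEuclideanLin_iff.mpr hH w v).symm
  rw [inner_quadParam_quadRegressor hH, map_sub, map_sub, inner_sub_left, inner_sub_right,
    inner_sub_right, inner_sub_left, hsymm, real_inner_comm v]
  ring

lemma highPass_quadModel_sub_inner_quadParam {H : Matrix (Fin m) (Fin m) ℝ} (hH : H.IsHermitian)
    (c : ℝ) {a t : ℝ} {x y : ℝ → EuclideanSpace ℝ (Fin m)} {φ : EuclideanSpace ℝ (SymIdx m)}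
    (hx : ContinuousOn x (Set.uIcc 0 t)) (hy : ContinuousOn y (Set.uIcc 0 t))
    (hφ : ∀ k, φ k = highPass a (fun τ => quadRegressor (y τ) k) t) :
    highPass a (fun τ => c - (1/2) * ⟪y τ - x τ, Matrix.toEuclideanLin H (y τ - x τ)⟫) t
        - ⟪quadParam H (x t), φ⟫
      = highPass a (fun τ => c - (1/2) * ⟪x τ, Matrix.toEuclideanLin H (x τ)⟫
          + ⟪Matrix.toEuclideanLin H (x τ - x t), y τ⟫) t := by
  rw [highPass_sub_inner (by fun_prop) (continuous_quadRegressor.comp_continuousOn hy) hφ]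
  simp only [Function.comp_apply, quadModel_sub_inner_quadParam hH]

end QuadraticModel

lemma continuousOn_uIcc_of_hasDerivAt {E : Type*} [NormedAddCommGroup E] [NormedSpace ℝ E]
    {f f' : ℝ → E} {t : ℝ} (ht : 0 ≤ t) (hf : ∀ s ≥ 0, HasDerivAt f (f' s) s) :
    ContinuousOn f (Set.uIcc 0 t) := fun s hs =>
  (hf s (Set.uIcc_of_le ht ▸ hs).1).continuousAt.continuousWithinAt

lemma abs_highPass_drift_residual_le {E : Type*} [NormedAddCommGroup E] [InnerProductSpace ℝ E]
    (T : E →L[ℝ] E) (c : ℝ) {a t ε M₁ M₄ : ℝ} {x x' y : ℝ → E} (ha : 0 < a) (ht : 0 ≤ t)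
    (hx : ∀ s ≥ 0, HasDerivAt x (x' s) s) (hx' : ∀ s ≥ 0, ‖x' s‖ ≤ ε)
    (hxM : ∀ s ≥ 0, ‖x s‖ ≤ M₄) (hy : ContinuousOn y (Set.uIcc 0 t))
    (hyM : ∀ s ≥ 0, ‖y s‖ ≤ M₁) :
    |highPass a (fun τ => c - (1/2) * ⟪x τ, T (x τ)⟫ + ⟪T (x τ - x t), y τ⟫) t|
      ≤ ‖T‖ * (|M₁| + |M₄|) * ε / a + (|c| + ‖T‖ * M₄ ^ 2 / 2) * exp (-a * t) := by
  set r : ℝ → ℝ := fun τ => c - (1/2) * ⟪x τ, T (x τ)⟫ + ⟪T (x τ - x t), y τ⟫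
  have hε : 0 ≤ ε := (norm_nonneg _).trans (hx' 0 le_rfl)
  have hxc := continuousOn_uIcc_of_hasDerivAt ht hx
  have hrt : r t = c - (1/2) * ⟪x t, T (x t)⟫ := by
    simp only [r, sub_self, map_zero, inner_zero_left, add_zero]
  have hlip : ∀ τ ∈ Set.Icc 0 t, |r t - r τ| ≤ ‖T‖ * (|M₁| + |M₄|) * ε * (t - τ) := by
    intro τ hτ
    have hxτ : ‖x τ - x t‖ ≤ ε * (t - τ) := by
      rw [norm_sub_rev]
      exact norm_image_sub_le_of_norm_deriv_le_segment'
        (fun s hs => (hx s (hτ.1.trans hs.1)).hasDerivWithinAt)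
        (fun s hs => hx' s (hτ.1.trans hs.1)) t ⟨hτ.2, le_rfl⟩
    rw [hrt]
    calc _ ≤ ‖T‖ * (|M₁| + |M₄|) * ‖x τ - x t‖ :=
          abs_drift_residual_sub_le T c ((hxM τ hτ.1).trans (le_abs_self _))
            ((hxM t ht).trans (le_abs_self _)) ((hyM τ hτ.1).trans (le_abs_self _))
      _ ≤ ‖T‖ * (|M₁| + |M₄|) * (ε * (t - τ)) := by gcongr
      _ = _ := by ring
  exact abs_highPass_le ha ht (by fun_prop : ContinuousOn r _).intervalIntegrable
    (by positivity) (hrt ▸ abs_sub_half_inner_map_self_le T c (hxM t ht)) hlip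

theorem drift_parametric_model_error_bound
    (m : ℕ) (a M₁ M₂ M₄ : ℝ) (ha : 0 < a)
    (H : Matrix (Fin m) (Fin m) ℝ) (hH : H.PosDef) :
    ∃ K₁ > (0:ℝ),
      ∀ (c1 M₃ ε : ℝ) (y y' y'' x x' : ℝ → EuclideanSpace ℝ (Fin m)),
        (∀ t ≥ (0:ℝ), HasDerivAt y (y' t) t) →
        (∀ t ≥ (0:ℝ), HasDerivAt y' (y'' t) t) →
        (∀ t ≥ (0:ℝ), ‖y t‖ ≤ M₁) →
        (∀ t ≥ (0:ℝ), ‖y' t‖ ≤ M₂) →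
        (∀ t ≥ (0:ℝ), ‖y'' t‖ ≤ M₃) →
        (∀ t ≥ (0:ℝ), HasDerivAt x (x' t) t) →
        (∀ t ≥ (0:ℝ), ‖x t‖ ≤ M₄) →
        (∀ t ≥ (0:ℝ), ‖x' t‖ ≤ ε) →
        ∀ (F z : ℝ → ℝ) (Ψ θs φ : ℝ → EuclideanSpace ℝ (SymIdx m)),
          (∀ t, F t = c1 - (1/2) * ⟪y t - x t, Matrix.toEuclideanLin H (y t - x t)⟫) →
          (∀ t (p : {p : Fin m × Fin m // p.1 ≤ p.2}),
            Ψ t (Sum.inl p) =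
              if p.1.1 = p.1.2 then -(1/2) * (y t p.1.1) ^ 2
              else -(y t p.1.1 * y t p.1.2)) →
          (∀ t (i : Fin m), Ψ t (Sum.inr i) = y t i) →
          (∀ t (p : {p : Fin m × Fin m // p.1 ≤ p.2}), θs t (Sum.inl p) = H p.1.1 p.1.2) →
          (∀ t (i : Fin m), θs t (Sum.inr i) = Matrix.toEuclideanLin H (x t) i) →
          (∀ t, z t = F t - a * ∫ τ in (0:ℝ)..t, Real.exp (-a * (t - τ)) * F τ) →
          (∀ t (k : SymIdx m),
            φ t k = Ψ t k - a * ∫ τ in (0:ℝ)..t, Real.exp (-a * (t - τ)) * Ψ τ k) →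
          ∃ M ≥ (0:ℝ), ∃ lam > (0:ℝ), ∀ t ≥ (0:ℝ),
            |z t - ⟪θs t, φ t⟫| ≤ K₁ * ε + M * Real.exp (-lam * t) := by
  set A := Matrix.toEuclideanCLM (𝕜 := ℝ) H
  refine ⟨‖A‖ * (|M₁| + |M₄|) / a + 1, by positivity, ?_⟩
  intro c1 M₃ ε y y' y'' x x' hy _ hyM _ _ hx hxM hx' F z Ψ θs φ hF hΨl hΨr hθl hθr hz hφ
  obtain rfl : Ψ = fun τ => quadRegressor (y τ) := by
    funext τ; ext (p | i)
    exacts [hΨl τ p, hΨr τ i]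
  obtain rfl : θs = fun τ => quadParam H (x τ) := by
    funext τ; ext (p | i)
    exacts [hθl τ p, hθr τ i]
  refine ⟨|c1| + ‖A‖ * M₄ ^ 2 / 2, by positivity, a, ha, fun t ht => ?_⟩
  have hyc := continuousOn_uIcc_of_hasDerivAt ht hy
  have hε : 0 ≤ ε := (norm_nonneg _).trans (hx' 0 le_rfl)
  rw [show z t = highPass a F t from hz t, funext hF,
    highPass_quadModel_sub_inner_quadParam hH.isHermitian c1
      (continuousOn_uIcc_of_hasDerivAt ht hx) hyc (hφ t)]
  refine (abs_highPass_drift_residual_le A c1 ha ht hx hx' hxM hyc hyM).trans ?_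
  have hK : ‖A‖ * (|M₁| + |M₄|) * ε / a ≤ (‖A‖ * (|M₁| + |M₄|) / a + 1) * ε := by
    rw [add_mul, one_mul, mul_div_right_comm]; linarith
  gcongr
end
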